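/- arXiv:2405.10096 — 6 statements merged into one kernel-verified Lean document; each statement's English description precedes it below -/
import Mathlib

section
/- Let κ : ℝ → Measure(ℝ) be the Markov kernel of the k-level stochastic quantizer with clipping: for y ∈ ℝ let c(y) = max(−C_q, min(C_q, y)), and if B(r) ≤ c(y) ≤ B(r+1) (with 0 ≤ r ≤ k−2) set κ(y) = ((B(r+1)−c(y))/δ)·Dirac(B(r)) + ((c(y)−B(r))/δ)·Dirac(B(r+1)). Then for every x ∈ [−C_q/2, C_q/2] and every r ∈ {0,1,…,k−1}, the probability that the output of the quantized Gaussian mechanism equals B(r), i.e. ((gaussianReal x σ²).bind κ)({B(r)}), equals the quantized-Gaussian pmf value P_x(r). -/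
open MeasureTheory Real

/-- Density of the normal distribution `N(x, σ²)`. -/
noncomputable def gpdf (σ x t : ℝ) : ℝ :=
  (1 / (σ * Real.sqrt (2 * Real.pi))) * Real.exp (-(t - x) ^ 2 / (2 * σ ^ 2))

/-- Quantization levels `B(r) = -C_q + r · δ`, with `δ = 2·C_q/(k-1)`. -/
noncomputable def Blev (Cq : ℝ) (k : ℕ) (r : ℕ) : ℝ :=
  -Cq + (r : ℝ) * (2 * Cq / ((k : ℝ) - 1))

/-- The quantized-Gaussian pmf `P_x(r)` on `{0, 1, …, k-1}`. -/
noncomputable def qgPmf (Cq σ : ℝ) (k : ℕ) (x : ℝ) (r : ℕ) : ℝ :=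
  if r = 0 then
    (∫ t in Set.Iic (Blev Cq k 0), gpdf σ x t)
      + ∫ t in (Blev Cq k 0)..(Blev Cq k 1),
          gpdf σ x t * (Blev Cq k 1 - t) / (2 * Cq / ((k : ℝ) - 1))
  else if r = k - 1 then
    (∫ t in (Blev Cq k (k - 2))..(Blev Cq k (k - 1)),
        gpdf σ x t * (t - Blev Cq k (k - 2)) / (2 * Cq / ((k : ℝ) - 1)))
      + ∫ t in Set.Ici (Blev Cq k (k - 1)), gpdf σ x t
  else
    (∫ t in (Blev Cq k (r - 1))..(Blev Cq k r),
        gpdf σ x t * (t - Blev Cq k (r - 1)) / (2 * Cq / ((k : ℝ) - 1)))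
      + ∫ t in (Blev Cq k r)..(Blev Cq k (r + 1)),
          gpdf σ x t * (Blev Cq k (r + 1) - t) / (2 * Cq / ((k : ℝ) - 1))
/-- Clipping to `[-C_q, C_q]`. -/
noncomputable def clipTo (Cq y : ℝ) : ℝ := max (-Cq) (min Cq y)

/-- Index `r ∈ {0, …, k-2}` of the quantization cell `[B(r), B(r+1)]` containing the
clipped input. -/
noncomputable def qIndex (Cq : ℝ) (k : ℕ) (y : ℝ) : ℕ :=
  min (k - 2) ⌊(clipTo Cq y + Cq) / (2 * Cq / ((k : ℝ) - 1))⌋₊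

/-- Markov kernel of the `k`-level stochastic quantizer with clipping: with
`c(y)` the clipped input and `B(r) ≤ c(y) ≤ B(r+1)`,
`κ(y) = ((B(r+1) - c(y))/δ)·Dirac(B(r)) + ((c(y) - B(r))/δ)·Dirac(B(r+1))`. -/
noncomputable def qKernel (Cq : ℝ) (k : ℕ) (y : ℝ) : Measure ℝ :=
  ENNReal.ofReal ((Blev Cq k (qIndex Cq k y + 1) - clipTo Cq y) / (2 * Cq / ((k : ℝ) - 1)))
      • Measure.dirac (Blev Cq k (qIndex Cq k y))
    + ENNReal.ofReal ((clipTo Cq y - Blev Cq k (qIndex Cq k y)) / (2 * Cq / ((k : ℝ) - 1)))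
      • Measure.dirac (Blev Cq k (qIndex Cq k y + 1))

/-!
Stochastic rounding of a clipped value `c ∈ [-C_q, C_q]` sends `c` to the level `B(r)` with
probability `max 0 (1 - |c - B(r)| / δ)`, the hat function of width `δ` centred at `B(r)`; this
holds whatever cell `[B(j), B(j+1)]` the quantizer picks for `c`, including at the cell
boundaries. So the probability of the output `B(r)` is `∫ φ_x(y) · hat_r(clip y) dy`. On
`[B(r-1), B(r+1)]` clipping is the identity and the hat function is the linear interpolation
weight appearing in `P_x(r)`; further out it vanishes, except that for `r = 0` and `r = k-1`
clipping collapses a whole Gaussian tail onto `B(r)`, where the weight is `1`.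
-/

noncomputable def tent (δ b c : ℝ) : ℝ := max 0 (1 - |c - b| / δ)

section Tent

variable {δ b c : ℝ}

lemma tent_nonneg : 0 ≤ tent δ b c := le_max_left _ _

lemma norm_tent_le_one (hδ : 0 ≤ δ) : ‖tent δ b c‖ ≤ 1 := by
  rw [Real.norm_of_nonneg tent_nonneg]
  exact max_le zero_le_one (sub_le_self _ (div_nonneg (abs_nonneg _) hδ))

lemma continuous_tent : Continuous (tent δ b) := by
  unfold tent
  fun_prop

@[simp]
lemma tent_self : tent δ b b = 1 := by simp [tent]

lemma tent_eq_zero (hδ : 0 < δ) (h : δ ≤ |c - b|) : tent δ b c = 0 :=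
  max_eq_left (by rw [sub_nonpos, one_le_div hδ]; exact h)

lemma tent_eq_of_le_of_le_add (hδ : 0 < δ) (h₁ : b ≤ c) (h₂ : c ≤ b + δ) :
    tent δ b c = (b + δ - c) / δ := by
  rw [tent, abs_of_nonneg (sub_nonneg.2 h₁), max_eq_right]
  · field_simp
    ring
  · rw [sub_nonneg, div_le_one hδ]
    linarith

lemma tent_add_eq_of_le_of_le_add (hδ : 0 < δ) (h₁ : b ≤ c) (h₂ : c ≤ b + δ) :
    tent δ (b + δ) c = (c - b) / δ := by
  rw [tent, abs_of_nonpos (by linarith), max_eq_right]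
  · field_simp
    ring
  · rw [sub_nonneg, div_le_one hδ]
    linarith

end Tent

section Clip

variable {Cq y b : ℝ}

lemma continuous_clipTo : Continuous (clipTo Cq) := by
  unfold clipTo
  fun_prop

lemma clipTo_mem_Icc (hC : 0 ≤ Cq) (y : ℝ) : clipTo Cq y ∈ Set.Icc (-Cq) Cq :=
  ⟨le_max_left _ _, max_le (by linarith) (min_le_left _ _)⟩

lemma clipTo_of_mem_Icc (hy : y ∈ Set.Icc (-Cq) Cq) : clipTo Cq y = y := by
  rw [clipTo, min_eq_right hy.2, max_eq_right hy.1]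

lemma clipTo_of_le_neg (hC : 0 ≤ Cq) (hy : y ≤ -Cq) : clipTo Cq y = -Cq := by
  rw [clipTo, min_eq_right (by linarith), max_eq_left hy]

lemma clipTo_of_ge (hC : 0 ≤ Cq) (hy : Cq ≤ y) : clipTo Cq y = Cq := by
  rw [clipTo, min_eq_left hy, max_eq_right (by linarith)]

lemma clipTo_le (hb : -Cq ≤ b) (hy : y ≤ b) : clipTo Cq y ≤ b :=
  max_le hb ((min_le_right _ _).trans hy)

lemma le_clipTo (hb : b ≤ Cq) (hy : b ≤ y) : b ≤ clipTo Cq y :=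
  le_max_of_le_right (le_min hb hy)

lemma integrable_mul_tent_clipTo {f : ℝ → ℝ} (hf : Integrable f) {δ : ℝ} (hδ : 0 ≤ δ)
    (b : ℝ) :
    Integrable fun y => f y * tent δ b (clipTo Cq y) :=
  hf.mul_bdd (continuous_tent.comp continuous_clipTo).aestronglyMeasurable
    (Filter.Eventually.of_forall fun _ => norm_tent_le_one hδ)

end Clip

lemma cast_min_floor_le {u : ℝ} (hu : 0 ≤ u) (n : ℕ) :
    ((min n ⌊u⌋₊ : ℕ) : ℝ) ≤ u :=
  (Nat.cast_le.2 (min_le_right _ _)).trans (Nat.floor_le hu)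

lemma le_cast_min_floor_add_one {u : ℝ} {n : ℕ} (hu : u ≤ n + 1) :
    u ≤ ((min n ⌊u⌋₊ : ℕ) : ℝ) + 1 := by
  rcases le_total n ⌊u⌋₊ with h | h
  · rwa [min_eq_left h]
  · rw [min_eq_right h]
    exact (Nat.lt_floor_add_one u).le

section Quantizer

variable {Cq : ℝ} {k : ℕ}

local notation "δ" => 2 * Cq / ((k : ℝ) - 1)

lemma step_pos (hC : 0 < Cq) (hk : 2 ≤ k) : 0 < δ :=
  div_pos (by positivity) (sub_pos.2 (Nat.one_lt_cast.2 hk))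

@[simp]
lemma Blev_zero : Blev Cq k 0 = -Cq := by simp [Blev]

lemma Blev_succ (j : ℕ) : Blev Cq k (j + 1) = Blev Cq k j + δ := by
  simp only [Blev]
  push_cast
  ring

lemma Blev_sub_one (hk : 2 ≤ k) : Blev Cq k (k - 1) = Cq := by
  rw [Blev, Nat.cast_sub (by omega), Nat.cast_one,
    mul_div_cancel₀ _ (sub_ne_zero.2 (Nat.one_lt_cast.2 hk).ne')]
  ring

lemma strictMono_Blev (hC : 0 < Cq) (hk : 2 ≤ k) : StrictMono (Blev Cq k) :=
  strictMono_nat_of_lt_succ fun j => by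
    rw [Blev_succ]
    linarith [step_pos hC hk]

lemma neg_le_Blev (hC : 0 < Cq) (hk : 2 ≤ k) (j : ℕ) : -Cq ≤ Blev Cq k j :=
  Blev_zero (Cq := Cq) (k := k) ▸ (strictMono_Blev hC hk).monotone (Nat.zero_le j)

lemma Blev_le (hC : 0 < Cq) (hk : 2 ≤ k) {j : ℕ} (hj : j ≤ k - 1) : Blev Cq k j ≤ Cq :=
  ((strictMono_Blev hC hk).monotone hj).trans_eq (Blev_sub_one hk)

lemma clipTo_mem_Icc_Blev_qIndex (hC : 0 < Cq) (hk : 2 ≤ k) (y : ℝ) :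
    clipTo Cq y ∈ Set.Icc (Blev Cq k (qIndex Cq k y)) (Blev Cq k (qIndex Cq k y + 1)) := by
  have hδ := step_pos hC hk
  have hc := clipTo_mem_Icc hC.le y
  set u := (clipTo Cq y + Cq) / δ with hu
  have hcu : clipTo Cq y = -Cq + u * δ := by rw [hu, div_mul_cancel₀ _ hδ.ne']; ring
  have hu_nonneg : 0 ≤ u := div_nonneg (by linarith [hc.1]) hδ.le
  have hu_le : u ≤ ((k - 2 : ℕ) : ℝ) + 1 := by
    have hk' : ((k - 2 : ℕ) : ℝ) + 1 = (k : ℝ) - 1 := by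
      rw [Nat.cast_sub hk]
      ring
    rw [hu, div_le_iff₀ hδ, hk',
      mul_div_cancel₀ _ (sub_ne_zero.2 (Nat.one_lt_cast.2 hk).ne')]
    linarith [hc.2]
  have hj : qIndex Cq k y = min (k - 2) ⌊u⌋₊ := rfl
  rw [hj, Set.mem_Icc, Blev_succ, Blev, hcu]
  have hlow := cast_min_floor_le hu_nonneg (k - 2)
  have hhigh := le_cast_min_floor_add_one hu_le
  constructor <;> nlinarith

lemma measurable_qIndex : Measurable (qIndex Cq k) :=
  measurable_const.min ((continuous_clipTo.measurable.add_const Cq).div_const _).nat_floor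

lemma measurable_qKernel : Measurable (qKernel Cq k) := by
  have hB : ∀ j, Measurable fun y => Blev Cq k (qIndex Cq k y + j) := fun j =>
    (measurable_from_top (f := fun n : ℕ => Blev Cq k (n + j))).comp measurable_qIndex
  refine Measure.measurable_of_measurable_coe _ fun s hs => ?_
  simp only [qKernel, Measure.add_apply, Measure.smul_apply, smul_eq_mul,
    Measure.dirac_apply' _ hs]
  have hind : Measurable (s.indicator (1 : ℝ → ENNReal)) := measurable_one.indicator hs
  exact ((((hB 1).sub continuous_clipTo.measurable).div_const _).ennreal_ofReal.mul
      (hind.comp (hB 0))).add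
    (((continuous_clipTo.measurable.sub (hB 0)).div_const _).ennreal_ofReal.mul
      (hind.comp (hB 1)))

lemma qKernel_apply_Blev (hC : 0 < Cq) (hk : 2 ≤ k) (r : ℕ) (y : ℝ) :
    qKernel Cq k y {Blev Cq k r} = ENNReal.ofReal (tent δ (Blev Cq k r) (clipTo Cq y)) := by
  have hδ := step_pos hC hk
  have hB := strictMono_Blev hC hk
  simp only [qKernel, Measure.add_apply, Measure.smul_apply, smul_eq_mul,
    Measure.dirac_apply' _ (measurableSet_singleton _), Set.indicator_apply,
    Set.mem_singleton_iff, hB.injective.eq_iff, Pi.one_apply]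
  obtain ⟨hlow, hhigh⟩ := clipTo_mem_Icc_Blev_qIndex hC hk y
  set j := qIndex Cq k y
  set c := clipTo Cq y
  rw [Blev_succ] at hhigh ⊢
  rcases lt_trichotomy r j with hr | rfl | hr
  · have hfar : δ ≤ |c - Blev Cq k r| := by
      have := hB.monotone (Nat.succ_le_of_lt hr)
      rw [Blev_succ] at this
      exact le_abs.2 (Or.inl (by linarith))
    rw [if_neg (by omega), if_neg (by omega), tent_eq_zero hδ hfar]
    simp
  · rw [if_pos rfl, if_neg (by omega), tent_eq_of_le_of_le_add hδ hlow hhigh]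
    simp
  rcases (Nat.succ_le_of_lt hr).eq_or_lt with rfl | hr
  · rw [if_neg (by omega), if_pos rfl, Blev_succ, tent_add_eq_of_le_of_le_add hδ hlow hhigh]
    simp
  · have hfar : δ ≤ |c - Blev Cq k r| := by
      have := hB.monotone (Nat.succ_le_of_lt hr)
      rw [Blev_succ, Blev_succ] at this
      exact le_abs.2 (Or.inr (by linarith))
    rw [if_neg (by omega), if_neg (by omega), tent_eq_zero hδ hfar]
    simp

lemma clipTo_of_mem_Icc_Blev (hC : 0 < Cq) {j : ℕ} (hj : j + 2 ≤ k) {y : ℝ}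
    (hy : y ∈ Set.Icc (Blev Cq k j) (Blev Cq k (j + 1))) : clipTo Cq y = y :=
  clipTo_of_mem_Icc ⟨(neg_le_Blev hC (by omega) j).trans hy.1,
    hy.2.trans (Blev_le hC (by omega) (by omega))⟩

lemma tent_Blev_clipTo_of_mem_Icc (hC : 0 < Cq) {j : ℕ} (hj : j + 2 ≤ k) {y : ℝ}
    (hy : y ∈ Set.Icc (Blev Cq k j) (Blev Cq k (j + 1))) :
    tent δ (Blev Cq k j) (clipTo Cq y) = (Blev Cq k (j + 1) - y) / δ := by
  rw [clipTo_of_mem_Icc_Blev hC hj hy]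
  rw [Blev_succ] at hy ⊢
  exact tent_eq_of_le_of_le_add (step_pos hC (by omega)) hy.1 hy.2

lemma tent_Blev_succ_clipTo_of_mem_Icc (hC : 0 < Cq) {j : ℕ} (hj : j + 2 ≤ k) {y : ℝ}
    (hy : y ∈ Set.Icc (Blev Cq k j) (Blev Cq k (j + 1))) :
    tent δ (Blev Cq k (j + 1)) (clipTo Cq y) = (y - Blev Cq k j) / δ := by
  rw [clipTo_of_mem_Icc_Blev hC hj hy]
  rw [Blev_succ] at hy ⊢
  exact tent_add_eq_of_le_of_le_add (step_pos hC (by omega)) hy.1 hy.2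

lemma tent_Blev_succ_clipTo_of_le (hC : 0 < Cq) (hk : 2 ≤ k) {j : ℕ} {y : ℝ}
    (hy : y ≤ Blev Cq k j) : tent δ (Blev Cq k (j + 1)) (clipTo Cq y) = 0 := by
  refine tent_eq_zero (step_pos hC hk) (le_abs.2 (Or.inr ?_))
  have := clipTo_le (neg_le_Blev hC hk j) hy
  rw [Blev_succ]
  linarith

lemma tent_Blev_clipTo_of_ge (hC : 0 < Cq) {j : ℕ} (hj : j + 2 ≤ k) {y : ℝ}
    (hy : Blev Cq k (j + 1) ≤ y) : tent δ (Blev Cq k j) (clipTo Cq y) = 0 := by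
  refine tent_eq_zero (step_pos hC (by omega)) (le_abs.2 (Or.inl ?_))
  have := le_clipTo (Blev_le hC (by omega) (by omega)) hy
  rw [Blev_succ] at this
  linarith

lemma tent_Blev_zero_clipTo_of_le (hC : 0 < Cq) {y : ℝ} (hy : y ≤ Blev Cq k 0) :
    tent δ (Blev Cq k 0) (clipTo Cq y) = 1 := by
  rw [Blev_zero] at hy ⊢
  rw [clipTo_of_le_neg hC.le hy, tent_self]

lemma tent_Blev_sub_one_clipTo_of_ge (hC : 0 < Cq) (hk : 2 ≤ k) {y : ℝ}
    (hy : Blev Cq k (k - 1) ≤ y) : tent δ (Blev Cq k (k - 1)) (clipTo Cq y) = 1 := by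
  rw [Blev_sub_one hk] at hy ⊢
  rw [clipTo_of_ge hC.le hy, tent_self]

variable {f : ℝ → ℝ}

lemma integral_mul_tent_Blev_zero (hC : 0 < Cq) (hk : 2 ≤ k) (hf : Integrable f) :
    ∫ y, f y * tent δ (Blev Cq k 0) (clipTo Cq y)
      = (∫ t in Set.Iic (Blev Cq k 0), f t)
        + ∫ t in (Blev Cq k 0)..(Blev Cq k 1), f t * (Blev Cq k 1 - t) / δ := by
  have hg := integrable_mul_tent_clipTo hf (step_pos hC hk).le (Cq := Cq) (Blev Cq k 0)
  have h01 := (strictMono_Blev hC hk).monotone (zero_le_one (α := ℕ))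
  have hleft : ∫ t in Set.Iic (Blev Cq k 0), f t
      = ∫ y in Set.Iic (Blev Cq k 0), f y * tent δ (Blev Cq k 0) (clipTo Cq y) :=
    setIntegral_congr_fun measurableSet_Iic fun y hy => by
      rw [tent_Blev_zero_clipTo_of_le hC hy, mul_one]
  have hmid : ∫ t in (Blev Cq k 0)..(Blev Cq k 1), f t * (Blev Cq k 1 - t) / δ
      = ∫ y in (Blev Cq k 0)..(Blev Cq k 1), f y * tent δ (Blev Cq k 0) (clipTo Cq y) :=
    intervalIntegral.integral_congr fun y hy => by
      rw [Set.uIcc_of_le h01] at hy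
      rw [tent_Blev_clipTo_of_mem_Icc hC hk hy, zero_add, mul_div_assoc]
  rw [hleft, hmid, ← intervalIntegral.integral_Iic_sub_Iic hg.integrableOn hg.integrableOn,
    add_sub_cancel, setIntegral_eq_integral_of_forall_compl_eq_zero fun y hy => by
      rw [tent_Blev_clipTo_of_ge hC hk (not_le.1 hy).le, mul_zero]]

lemma integral_mul_tent_Blev_sub_one (hC : 0 < Cq) (hk : 2 ≤ k) (hf : Integrable f) :
    ∫ y, f y * tent δ (Blev Cq k (k - 1)) (clipTo Cq y)
      = (∫ t in (Blev Cq k (k - 2))..(Blev Cq k (k - 1)), f t * (t - Blev Cq k (k - 2)) / δ)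
        + ∫ t in Set.Ici (Blev Cq k (k - 1)), f t := by
  have hk₁ : k - 1 = k - 2 + 1 := by omega
  rw [hk₁]
  set j := k - 2
  have hg := integrable_mul_tent_clipTo hf (step_pos hC hk).le (Cq := Cq) (Blev Cq k (j + 1))
  have hj := (strictMono_Blev hC hk).monotone (Nat.le_succ j)
  have hmid : ∫ t in (Blev Cq k j)..(Blev Cq k (j + 1)), f t * (t - Blev Cq k j) / δ
      = ∫ y in (Blev Cq k j)..(Blev Cq k (j + 1)),
          f y * tent δ (Blev Cq k (j + 1)) (clipTo Cq y) :=
    intervalIntegral.integral_congr fun y hy => by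
      rw [Set.uIcc_of_le hj] at hy
      rw [tent_Blev_succ_clipTo_of_mem_Icc hC (by omega) hy, mul_div_assoc]
  have hright : ∫ t in Set.Ici (Blev Cq k (j + 1)), f t
      = ∫ y in Set.Ici (Blev Cq k (j + 1)), f y * tent δ (Blev Cq k (j + 1)) (clipTo Cq y) :=
    setIntegral_congr_fun measurableSet_Ici fun y hy => by
      rw [← hk₁] at hy ⊢
      rw [tent_Blev_sub_one_clipTo_of_ge hC hk hy, mul_one]
  rw [hmid, hright, ← intervalIntegral.integral_Ici_sub_Ici' hg.integrableOn hg.integrableOn,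
    sub_add_cancel, setIntegral_eq_integral_of_forall_compl_eq_zero fun y hy => by
      rw [tent_Blev_succ_clipTo_of_le hC hk (not_le.1 hy).le, mul_zero]]

lemma integral_mul_tent_Blev (hC : 0 < Cq) (hf : Integrable f) {r : ℕ} (hr₀ : 1 ≤ r)
    (hr : r + 2 ≤ k) :
    ∫ y, f y * tent δ (Blev Cq k r) (clipTo Cq y)
      = (∫ t in (Blev Cq k (r - 1))..(Blev Cq k r), f t * (t - Blev Cq k (r - 1)) / δ)
        + ∫ t in (Blev Cq k r)..(Blev Cq k (r + 1)), f t * (Blev Cq k (r + 1) - t) / δ := by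
  obtain ⟨j, rfl⟩ : ∃ j, r = j + 1 := ⟨r - 1, by omega⟩
  have hk : 2 ≤ k := by omega
  have hg := integrable_mul_tent_clipTo hf (step_pos hC hk).le (Cq := Cq) (Blev Cq k (j + 1))
  have hmono := (strictMono_Blev hC hk).monotone
  have hup : ∫ t in (Blev Cq k j)..(Blev Cq k (j + 1)), f t * (t - Blev Cq k j) / δ
      = ∫ y in (Blev Cq k j)..(Blev Cq k (j + 1)),
          f y * tent δ (Blev Cq k (j + 1)) (clipTo Cq y) :=
    intervalIntegral.integral_congr fun y hy => by
      rw [Set.uIcc_of_le (hmono (Nat.le_succ j))] at hy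
      rw [tent_Blev_succ_clipTo_of_mem_Icc hC (by omega) hy, mul_div_assoc]
  have hdown : ∫ t in (Blev Cq k (j + 1))..(Blev Cq k (j + 2)),
        f t * (Blev Cq k (j + 2) - t) / δ
      = ∫ y in (Blev Cq k (j + 1))..(Blev Cq k (j + 2)),
          f y * tent δ (Blev Cq k (j + 1)) (clipTo Cq y) :=
    intervalIntegral.integral_congr fun y hy => by
      rw [Set.uIcc_of_le (hmono (Nat.le_succ _))] at hy
      rw [tent_Blev_clipTo_of_mem_Icc hC hr hy, mul_div_assoc]
  have hvanish : ∀ y ∉ Set.Ioc (Blev Cq k j) (Blev Cq k (j + 2)),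
      f y * tent δ (Blev Cq k (j + 1)) (clipTo Cq y) = 0 := fun y hy => by
    rcases le_or_gt y (Blev Cq k j) with hy' | hy'
    · rw [tent_Blev_succ_clipTo_of_le hC hk hy', mul_zero]
    · rw [tent_Blev_clipTo_of_ge hC hr (not_le.1 fun h => hy ⟨hy', h⟩).le, mul_zero]
  rw [Nat.add_sub_cancel, hup, hdown, intervalIntegral.integral_add_adjacent_intervals
      hg.intervalIntegrable hg.intervalIntegrable,
    intervalIntegral.integral_of_le (hmono (by omega)),
    setIntegral_eq_integral_of_forall_compl_eq_zero hvanish]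

end Quantizer

lemma MeasureTheory.Measure.bind_apply_eq_ofReal_integral {α β : Type*} [MeasurableSpace α]
    [MeasurableSpace β] {μ : Measure α} {κ : α → Measure β} (hκ : AEMeasurable κ μ)
    {s : Set β} (hs : MeasurableSet s) {w : α → ℝ} (hw : ∀ a, κ a s = ENNReal.ofReal (w a))
    (hw_int : Integrable w μ) (hw_nonneg : 0 ≤ᵐ[μ] w) :
    μ.bind κ s = ENNReal.ofReal (∫ a, w a ∂μ) := by
  simp_rw [Measure.bind_apply hs hκ, hw, ofReal_integral_eq_lintegral_ofReal hw_int hw_nonneg]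

lemma gaussianPDFReal_eq_gpdf {σ : ℝ} (hσ : 0 < σ) (x : ℝ) :
    ProbabilityTheory.gaussianPDFReal x (σ ^ 2).toNNReal = gpdf σ x := by
  ext y
  rw [ProbabilityTheory.gaussianPDFReal, gpdf, Real.coe_toNNReal _ (sq_nonneg σ),
    Real.sqrt_mul (by positivity), Real.sqrt_sq hσ.le, one_div, mul_comm σ]

theorem quantGauss_kernel_apply_general (Cq σ : ℝ) (hC : 0 < Cq) (hσ : 0 < σ)
    (k : ℕ) (hk : 2 ≤ k) (x : ℝ)
    (r : ℕ) (hr : r < k) :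
    ((ProbabilityTheory.gaussianReal x (σ ^ 2).toNNReal).bind (qKernel Cq k))
        {Blev Cq k r}
      = ENNReal.ofReal (qgPmf Cq σ k x r) := by
  have hδ := step_pos hC hk
  have hv : (σ ^ 2).toNNReal ≠ 0 := by
    simpa only [ne_eq, Real.toNNReal_eq_zero, not_le] using pow_pos hσ 2
  have hw_int : Integrable (fun y => tent (2 * Cq / ((k : ℝ) - 1)) (Blev Cq k r) (clipTo Cq y))
      (ProbabilityTheory.gaussianReal x (σ ^ 2).toNNReal) :=
    .of_bound (continuous_tent.comp continuous_clipTo).aestronglyMeasurable 1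
      (Filter.Eventually.of_forall fun _ => norm_tent_le_one hδ.le)
  have hf : Integrable (gpdf σ x) :=
    gaussianPDFReal_eq_gpdf hσ x ▸ ProbabilityTheory.integrable_gaussianPDFReal _ _
  rw [Measure.bind_apply_eq_ofReal_integral measurable_qKernel.aemeasurable
      (measurableSet_singleton _) (qKernel_apply_Blev hC hk r) hw_int
      (Filter.Eventually.of_forall fun _ => tent_nonneg),
    ProbabilityTheory.integral_gaussianReal_eq_integral_smul hv, gaussianPDFReal_eq_gpdf hσ]
  simp only [smul_eq_mul, qgPmf]
  split_ifs with h₀ hlast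
  · rw [h₀, integral_mul_tent_Blev_zero hC hk hf]
  · rw [hlast, integral_mul_tent_Blev_sub_one hC hk hf]
  · rw [integral_mul_tent_Blev hC hf (by omega) (by omega)]

/-- For every `x ∈ [-C_q/2, C_q/2]` and every `r ∈ {0, …, k-1}`, the probability that
the output of the quantized Gaussian mechanism equals `B(r)` is the quantized-Gaussian
pmf value `P_x(r)`. -/
theorem quantGauss_kernel_apply (Cq σ : ℝ) (hC : 0 < Cq) (hσ : 0 < σ)
    (k : ℕ) (hk : 2 ≤ k) (x : ℝ) (hx : x ∈ Set.Icc (-(Cq / 2)) (Cq / 2))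
    (r : ℕ) (hr : r < k) :
    ((ProbabilityTheory.gaussianReal x (σ ^ 2).toNNReal).bind (qKernel Cq k))
        {Blev Cq k r}
      = ENNReal.ofReal (qgPmf Cq σ k x r) :=
  quantGauss_kernel_apply_general Cq σ hC hσ k hk x r hr
end

section
/- (Lemma 4, core monotonicity.) Define g : (0, 2·C_q] → ℝ by g(δ) = (1/δ)·∫_{C_q−δ}^{C_q} f_{−C_q/2}(t)·(t−(C_q−δ)) dt, where f_{−C_q/2} is the density of N(−C_q/2, σ²). Then g is strictly monotone increasing on (0, 2·C_q]: for all 0 < δ₁ < δ₂ ≤ 2·C_q, g(δ₁) < g(δ₂). -/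
open MeasureTheory Real

/-! Moving the left end of the ramp from `b - δ₁` to `b - δ₂` adds the nonnegative mass
`∫_{b-δ₂}^{b-δ₁} f(t)(t - (b-δ₂))` and raises the ramp on `[b-δ₁, b]` by `(δ₂-δ₁)·∫_{b-δ₁}^b f`.
Since the ramp `t - (b-δ₁)` stays below `δ₁` there, the latter exceeds `(δ₂-δ₁)/δ₁` times the old
integral, which is exactly what strict growth of the average requires. -/

theorem continuous_gpdf (σ x : ℝ) : Continuous (gpdf σ x) := by
  unfold gpdf
  fun_prop

theorem gpdf_pos {σ : ℝ} (hσ : 0 < σ) (x t : ℝ) : 0 < gpdf σ x t := by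
  unfold gpdf
  have : 0 < Real.sqrt (2 * Real.pi) := Real.sqrt_pos.mpr (by positivity)
  positivity

section Ramp

variable {f : ℝ → ℝ}

theorem integral_mul_sub_eq_add (hf : Continuous f) (a₂ a₁ b : ℝ) :
    ∫ t in a₂..b, f t * (t - a₂) =
      (∫ t in a₂..a₁, f t * (t - a₂)) + (∫ t in a₁..b, f t * (t - a₁))
        + (a₁ - a₂) * ∫ t in a₁..b, f t := by
  have hramp : ∀ c : ℝ, Continuous fun t => f t * (t - c) := fun c => by fun_prop
  rw [← intervalIntegral.integral_add_adjacent_intervals ((hramp a₂).intervalIntegrable a₂ a₁)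
    ((hramp a₂).intervalIntegrable a₁ b), add_assoc, ← intervalIntegral.integral_const_mul,
    ← intervalIntegral.integral_add ((hramp a₁).intervalIntegrable a₁ b)
      ((hf.const_mul _).intervalIntegrable a₁ b)]
  congr 1
  exact intervalIntegral.integral_congr fun t _ => by ring

theorem integral_mul_sub_lt_mul_integral (hf : Continuous f) (hpos : ∀ t, 0 < f t) {a b : ℝ}
    (hab : a < b) : ∫ t in a..b, f t * (t - a) < (b - a) * ∫ t in a..b, f t := by
  have hramp : Continuous fun t => f t * (t - a) := by fun_prop
  rw [← intervalIntegral.integral_const_mul, ← sub_pos,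
    ← intervalIntegral.integral_sub ((hf.const_mul _).intervalIntegrable a b)
      (hramp.intervalIntegrable a b)]
  refine intervalIntegral.intervalIntegral_pos_of_pos_on
    (Continuous.intervalIntegrable (by fun_prop) a b) (fun t ht => ?_) hab
  have := hpos t
  nlinarith [ht.2]

theorem strictMonoOn_average_integral_mul_sub (hf : Continuous f) (hpos : ∀ t, 0 < f t) (b : ℝ) :
    StrictMonoOn (fun δ => (1 / δ) * ∫ t in (b - δ)..b, f t * (t - (b - δ))) (Set.Ioi 0) := by
  intro δ₁ (h1 : 0 < δ₁) δ₂ (h2 : 0 < δ₂) h12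
  have hsplit := integral_mul_sub_eq_add hf (b - δ₂) (b - δ₁) b
  have hkey := integral_mul_sub_lt_mul_integral hf hpos (a := b - δ₁) (b := b) (by linarith)
  have hnew : 0 ≤ ∫ t in (b - δ₂)..(b - δ₁), f t * (t - (b - δ₂)) :=
    intervalIntegral.integral_nonneg (by linarith) fun t ht =>
      mul_nonneg (hpos t).le (sub_nonneg.mpr ht.1)
  rw [sub_sub_cancel] at hkey
  rw [sub_sub_sub_cancel_left] at hsplit
  show 1 / δ₁ * _ < 1 / δ₂ * _
  rw [one_div_mul_eq_div, one_div_mul_eq_div, div_lt_div_iff₀ h1 h2, hsplit]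
  nlinarith [mul_pos h1 (sub_pos.mpr h12)]

end Ramp

theorem endcell_mass_strictMono_general (Cq σ : ℝ) (hσ : 0 < σ)
    (δ₁ δ₂ : ℝ) (h1 : 0 < δ₁) (h12 : δ₁ < δ₂) :
    (1 / δ₁) * ∫ t in (Cq - δ₁)..Cq, gpdf σ (-(Cq / 2)) t * (t - (Cq - δ₁))
      < (1 / δ₂) * ∫ t in (Cq - δ₂)..Cq, gpdf σ (-(Cq / 2)) t * (t - (Cq - δ₂)) :=
  strictMonoOn_average_integral_mul_sub (continuous_gpdf σ _) (gpdf_pos hσ _) Cq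
    h1 (h1.trans h12) h12

/-- Lemma 4, core monotonicity: the normalized end-cell mass
`g(δ) = (1/δ)·∫_{C_q-δ}^{C_q} f_{-C_q/2}(t)·(t - (C_q - δ)) dt` is strictly monotone
increasing on `(0, 2·C_q]`. -/
theorem endcell_mass_strictMono (Cq σ : ℝ) (hC : 0 < Cq) (hσ : 0 < σ)
    (δ₁ δ₂ : ℝ) (h1 : 0 < δ₁) (h12 : δ₁ < δ₂) (h2 : δ₂ ≤ 2 * Cq) :
    (1 / δ₁) * ∫ t in (Cq - δ₁)..Cq, gpdf σ (-(Cq / 2)) t * (t - (Cq - δ₁))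
      < (1 / δ₂) * ∫ t in (Cq - δ₂)..Cq, gpdf σ (-(Cq / 2)) t * (t - (Cq - δ₂)) :=
  endcell_mass_strictMono_general Cq σ hσ δ₁ δ₂ h1 h12
end

section
/- (Lemma 1, endpoint cases: D_1 ≤ D_α ≤ D_∞ for finite pmfs.) Let P, Q : Fin n → ℝ be probability mass functions on a finite set (nonnegative, each summing to 1) with P(i) > 0 and Q(i) > 0 for all i. Then for every real α > 1: ∑_i P(i)·log(P(i)/Q(i)) ≤ (1/(α−1))·log(∑_i P(i)^α·Q(i)^{1−α}) ≤ max_i log(P(i)/Q(i)). -/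
open Real

/-!
Writing `r i = P i / Q i`, the order-`α` sum is `∑ P i * r i ^ (α - 1)`, so with `t = α - 1 > 0`
the Rényi divergence is the logarithm of the `t`-power mean of `r` under the weights `P`. That
power mean lies between the geometric mean (Jensen for the concave `log`), whose logarithm is the
KL divergence, and the maximum of `r`.
-/

open Finset

section PowerMean

variable {ι : Type*} {s : Finset ι} {w x : ι → ℝ}

lemma sum_mul_log_le_log_sum_mul (hw : ∀ i ∈ s, 0 ≤ w i) (hw1 : ∑ i ∈ s, w i = 1)
    (hx : ∀ i ∈ s, 0 < x i) :
    ∑ i ∈ s, w i * log (x i) ≤ log (∑ i ∈ s, w i * x i) := by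
  simpa only [smul_eq_mul] using strictConcaveOn_log_Ioi.concaveOn.le_map_sum hw hw1 hx

lemma sum_mul_le_of_le {c : ℝ} (hw : ∀ i ∈ s, 0 ≤ w i) (hw1 : ∑ i ∈ s, w i = 1)
    (hxc : ∀ i ∈ s, x i ≤ c) :
    ∑ i ∈ s, w i * x i ≤ c :=
  calc ∑ i ∈ s, w i * x i ≤ ∑ i ∈ s, w i * c :=
        sum_le_sum fun i hi => mul_le_mul_of_nonneg_left (hxc i hi) (hw i hi)
    _ = c := by rw [← sum_mul, hw1, one_mul]

lemma sum_mul_pos (hw : ∀ i ∈ s, 0 ≤ w i) (hw1 : ∑ i ∈ s, w i = 1) (hx : ∀ i ∈ s, 0 < x i) :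
    0 < ∑ i ∈ s, w i * x i := by
  obtain ⟨j, hj, hwj⟩ : ∃ j ∈ s, 0 < w j :=
    exists_lt_of_sum_lt (by simpa only [sum_const_zero, hw1] using zero_lt_one)
  exact sum_pos' (fun i hi => mul_nonneg (hw i hi) (hx i hi).le) ⟨j, hj, mul_pos hwj (hx j hj)⟩

variable {t : ℝ}

lemma sum_mul_log_le_inv_mul_log_sum_mul_rpow (ht : 0 < t) (hw : ∀ i ∈ s, 0 ≤ w i)
    (hw1 : ∑ i ∈ s, w i = 1) (hx : ∀ i ∈ s, 0 < x i) :
    ∑ i ∈ s, w i * log (x i) ≤ 1 / t * log (∑ i ∈ s, w i * x i ^ t) := by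
  have hjensen := sum_mul_log_le_log_sum_mul hw hw1 fun i hi => rpow_pos_of_pos (hx i hi) t
  calc ∑ i ∈ s, w i * log (x i) = 1 / t * ∑ i ∈ s, w i * log (x i ^ t) := by
        rw [mul_sum]
        refine sum_congr rfl fun i hi => ?_
        rw [log_rpow (hx i hi)]
        field_simp
    _ ≤ 1 / t * log (∑ i ∈ s, w i * x i ^ t) := by gcongr

lemma inv_mul_log_sum_mul_rpow_le_sup' (hs : s.Nonempty) (ht : 0 < t) (hw : ∀ i ∈ s, 0 ≤ w i)
    (hw1 : ∑ i ∈ s, w i = 1) (hx : ∀ i ∈ s, 0 < x i) :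
    1 / t * log (∑ i ∈ s, w i * x i ^ t) ≤ s.sup' hs fun i => log (x i) := by
  set M := s.sup' hs fun i => log (x i)
  have hpow_le : ∀ i ∈ s, x i ^ t ≤ exp (t * M) := fun i hi => by
    rw [rpow_def_of_pos (hx i hi), mul_comm]
    gcongr
    exact le_sup' (fun i => log (x i)) hi
  have hsum_pos := sum_mul_pos hw hw1 fun i hi => rpow_pos_of_pos (hx i hi) t
  calc 1 / t * log (∑ i ∈ s, w i * x i ^ t) ≤ 1 / t * log (exp (t * M)) := by
        gcongr
        exact sum_mul_le_of_le hw hw1 hpow_le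
    _ = M := by rw [log_exp]; field_simp

end PowerMean

lemma rpow_mul_rpow_one_sub {p q : ℝ} (hp : 0 < p) (hq : 0 < q) (α : ℝ) :
    p ^ α * q ^ (1 - α) = p * (p / q) ^ (α - 1) := by
  rw [div_rpow hp.le hq.le, rpow_sub_one hp.ne', ← neg_sub α 1, rpow_neg hq.le]
  field_simp

theorem kl_le_renyi_le_max_general (n : ℕ) (hn : 0 < n) (P Q : Fin n → ℝ)
    (hP0 : ∀ i, 0 < P i) (hQ0 : ∀ i, 0 < Q i)
    (hP1 : ∑ i, P i = 1)
    (α : ℝ) (hα : 1 < α) :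
    ∑ i, P i * Real.log (P i / Q i)
        ≤ (1 / (α - 1)) * Real.log (∑ i, P i ^ α * Q i ^ (1 - α))
    ∧ (1 / (α - 1)) * Real.log (∑ i, P i ^ α * Q i ^ (1 - α))
        ≤ Finset.univ.sup'
            (Finset.univ_nonempty_iff.mpr ⟨⟨0, hn⟩⟩)
            (fun i => Real.log (P i / Q i)) := by
  have ht : 0 < α - 1 := sub_pos.mpr hα
  have hr : ∀ i ∈ univ, 0 < P i / Q i := fun i _ => div_pos (hP0 i) (hQ0 i)
  have hP : ∀ i ∈ univ, 0 ≤ P i := fun i _ => (hP0 i).le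
  simp only [rpow_mul_rpow_one_sub (hP0 _) (hQ0 _)]
  exact ⟨sum_mul_log_le_inv_mul_log_sum_mul_rpow ht hP hP1 hr,
    inv_mul_log_sum_mul_rpow_le_sup' _ ht hP hP1 hr⟩

/-- Lemma 1, endpoint cases `D_1 ≤ D_α ≤ D_∞` for finite pmfs: for pmfs `P, Q` on
`Fin n` with `P` and `Q` strictly positive and any real `α > 1`, the KL divergence is
at most the order-`α` Rényi divergence, which is at most the order-`∞` Rényi
divergence `max_i log(P i / Q i)`. -/
theorem kl_le_renyi_le_max (n : ℕ) (hn : 0 < n) (P Q : Fin n → ℝ)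
    (hP0 : ∀ i, 0 < P i) (hQ0 : ∀ i, 0 < Q i)
    (hP1 : ∑ i, P i = 1) (hQ1 : ∑ i, Q i = 1)
    (α : ℝ) (hα : 1 < α) :
    ∑ i, P i * Real.log (P i / Q i)
        ≤ (1 / (α - 1)) * Real.log (∑ i, P i ^ α * Q i ^ (1 - α))
    ∧ (1 / (α - 1)) * Real.log (∑ i, P i ^ α * Q i ^ (1 - α))
        ≤ Finset.univ.sup'
            (Finset.univ_nonempty_iff.mpr ⟨⟨0, hn⟩⟩)
            (fun i => Real.log (P i / Q i)) :=
  kl_le_renyi_le_max_general n hn P Q hP0 hQ0 hP1 α hα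
end

section
/- (Rényi divergence between equal-variance Gaussians, used for the Gaussian mechanism budget.) For all reals μ, ν, every σ > 0, and every real α > 1, letting f_μ and f_ν be the densities of N(μ, σ²) and N(ν, σ²) respectively, (1/(α−1))·log( ∫_ℝ f_μ(t)^α · f_ν(t)^{1−α} dt ) = α·(μ−ν)²/(2σ²). In particular, the Gaussian mechanism with ℓ2-sensitivity Δ and noise variance σ² satisfies (α, α·Δ²/(2σ²))-RDP. -/
/-!
Raising the two Gaussian densities to the complementary powers `α` and `1 - α` and completing
the square in the exponent, `f_μ^α f_ν^(1-α)` is `exp (α (α - 1) (μ - ν)² / (2σ²))` times the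
density of `N(αμ + (1 - α)ν, σ²)`. The integral is therefore that exponential factor, and its
logarithm divided by `α - 1` is `α (μ - ν)² / (2σ²)`.
-/

open MeasureTheory Real

open ProbabilityTheory

noncomputable def renyiDiv (α : ℝ) (p q : ℝ → ℝ) : ℝ :=
  (1 / (α - 1)) * log (∫ t, p t ^ α * q t ^ (1 - α))

lemma gpdf_eq_gaussianPDFReal {σ : ℝ} (hσ : 0 < σ) (x : ℝ) :
    gpdf σ x = gaussianPDFReal x (σ ^ 2).toNNReal := by
  ext t
  have hsqrt : √(2 * π * σ ^ 2) = σ * √(2 * π) := by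
    rw [mul_comm, sqrt_mul (sq_nonneg σ), sqrt_sq hσ.le]
  rw [gpdf, gaussianPDFReal, coe_toNNReal _ (sq_nonneg σ), hsqrt, one_div]

lemma integral_gpdf {σ : ℝ} (hσ : 0 < σ) (x : ℝ) : ∫ t, gpdf σ x t = 1 := by
  rw [gpdf_eq_gaussianPDFReal hσ]
  exact integral_gaussianPDFReal_eq_one x (toNNReal_pos.mpr (by positivity)).ne'

lemma mul_exp_rpow_mul_mul_exp_rpow_one_sub {c : ℝ} (hc : 0 < c) (a b α : ℝ) :
    (c * exp a) ^ α * (c * exp b) ^ (1 - α) = c * exp (α * a + (1 - α) * b) := by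
  rw [mul_rpow hc.le (exp_nonneg a), mul_rpow hc.le (exp_nonneg b), ← exp_mul, ← exp_mul,
    mul_mul_mul_comm, ← rpow_add hc, add_sub_cancel, rpow_one, ← exp_add, mul_comm a, mul_comm b]

lemma gpdf_rpow_mul_gpdf_rpow_one_sub {σ : ℝ} (hσ : 0 < σ) (μ ν α t : ℝ) :
    gpdf σ μ t ^ α * gpdf σ ν t ^ (1 - α)
      = exp (α * (α - 1) * (μ - ν) ^ 2 / (2 * σ ^ 2)) * gpdf σ (α * μ + (1 - α) * ν) t := by
  have completing_square :
      α * (-(t - μ) ^ 2 / (2 * σ ^ 2)) + (1 - α) * (-(t - ν) ^ 2 / (2 * σ ^ 2))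
        = α * (α - 1) * (μ - ν) ^ 2 / (2 * σ ^ 2)
          + -(t - (α * μ + (1 - α) * ν)) ^ 2 / (2 * σ ^ 2) := by
    field_simp
    ring
  rw [gpdf, gpdf, mul_exp_rpow_mul_mul_exp_rpow_one_sub (by positivity), completing_square,
    exp_add, gpdf]
  ring

lemma integral_gpdf_rpow_mul_gpdf_rpow_one_sub {σ : ℝ} (hσ : 0 < σ) (μ ν α : ℝ) :
    ∫ t, gpdf σ μ t ^ α * gpdf σ ν t ^ (1 - α) = exp (α * (α - 1) * (μ - ν) ^ 2 / (2 * σ ^ 2)) := by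
  simp only [gpdf_rpow_mul_gpdf_rpow_one_sub hσ]
  rw [integral_const_mul, integral_gpdf hσ, mul_one]

lemma renyiDiv_gpdf {σ : ℝ} (hσ : 0 < σ) (μ ν : ℝ) {α : ℝ} (hα : α ≠ 1) :
    renyiDiv α (gpdf σ μ) (gpdf σ ν) = α * (μ - ν) ^ 2 / (2 * σ ^ 2) := by
  have hα' : α - 1 ≠ 0 := sub_ne_zero.mpr hα
  rw [renyiDiv, integral_gpdf_rpow_mul_gpdf_rpow_one_sub hσ, log_exp]
  field_simp

/-- Rényi divergence of order `α > 1` between the equal-variance Gaussians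
`N(μ, σ²)` and `N(ν, σ²)` equals `α·(μ-ν)²/(2σ²)`; in particular, the Gaussian
mechanism with ℓ2-sensitivity `Δ` and noise variance `σ²` is `(α, α·Δ²/(2σ²))`-RDP. -/
theorem renyi_div_gaussian (μ ν σ : ℝ) (hσ : 0 < σ) (α : ℝ) (hα : 1 < α) :
    (1 / (α - 1)) * Real.log (∫ t : ℝ, gpdf σ μ t ^ α * gpdf σ ν t ^ (1 - α))
        = α * (μ - ν) ^ 2 / (2 * σ ^ 2)
    ∧ ∀ Δ : ℝ, |μ - ν| ≤ Δ →
        (1 / (α - 1)) * Real.log (∫ t : ℝ, gpdf σ μ t ^ α * gpdf σ ν t ^ (1 - α))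
          ≤ α * Δ ^ 2 / (2 * σ ^ 2) := by
  have hdiv : renyiDiv α (gpdf σ μ) (gpdf σ ν) = α * (μ - ν) ^ 2 / (2 * σ ^ 2) :=
    renyiDiv_gpdf hσ μ ν hα.ne'
  refine ⟨hdiv, fun Δ hΔ => hdiv.trans_le ?_⟩
  have hsq : (μ - ν) ^ 2 ≤ Δ ^ 2 := sq_abs (μ - ν) ▸ pow_le_pow_left₀ (abs_nonneg _) hΔ 2
  gcongr
end

section
/- (Theorem 1, post-processing / data-processing inequality for the Rényi divergence, finite stochastic-matrix case.) Let P, Q : Fin n → ℝ be probability mass functions (nonnegative, summing to 1) with Q(i) > 0 for all i, and let K : Fin n → Fin m → ℝ be a stochastic matrix (K(i)(j) ≥ 0 for all i, j and ∑_j K(i)(j) = 1 for all i) such that for every j there exists i with K(i)(j) > 0. Define the pushforward pmfs (KP)(j) = ∑_i P(i)·K(i)(j) and (KQ)(j) = ∑_i Q(i)·K(i)(j). Then for every real α > 1, (1/(α−1))·log(∑_j (KP)(j)^α·(KQ)(j)^{1−α}) ≤ (1/(α−1))·log(∑_i P(i)^α·Q(i)^{1−α}). -/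
open Real

/-! For `α ≥ 1` the summand `a ^ α * b ^ (1 - α) = b * (a / b) ^ α` is the perspective of the
convex function `t ↦ t ^ α`, so Jensen's inequality makes it subadditive:
`(∑ aᵢ) ^ α (∑ bᵢ) ^ (1 - α) ≤ ∑ aᵢ ^ α bᵢ ^ (1 - α)`. Taking `aᵢ = P i * K i j`,
`bᵢ = Q i * K i j` and summing over `j`, the rows of `K` summing to `1` give
`∑ⱼ (KP)ⱼ ^ α (KQ)ⱼ ^ (1 - α) ≤ ∑ᵢ Pᵢ ^ α Qᵢ ^ (1 - α)`; for `α > 1` both `log` and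
multiplication by `1 / (α - 1)` are monotone. -/

section

variable {ι κ : Type*}

theorem mul_div_rpow_eq_rpow_mul_rpow_one_sub {a b α : ℝ} (ha : 0 ≤ a) (hb : 0 ≤ b)
    (hab : b = 0 → a = 0) (hα : α ≠ 0) : b * (a / b) ^ α = a ^ α * b ^ (1 - α) := by
  rcases hb.eq_or_lt with rfl | hb
  · simp [hab rfl, zero_rpow hα]
  · rw [div_rpow ha hb.le, rpow_sub hb, rpow_one]
    field_simp

theorem mul_rpow_mul_mul_rpow_one_sub {x y c α : ℝ} (hx : 0 ≤ x) (hy : 0 ≤ y) (hc : 0 ≤ c) :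
    (x * c) ^ α * (y * c) ^ (1 - α) = x ^ α * y ^ (1 - α) * c := by
  have hcc : c ^ α * c ^ (1 - α) = c := by
    rw [← rpow_add' hc (by simp), add_sub_cancel, rpow_one]
  rw [mul_rpow hx hc, mul_rpow hy hc, mul_mul_mul_comm, hcc]

theorem rpow_sum_mul_rpow_sum_one_sub_le (s : Finset ι) {a b : ι → ℝ} {α : ℝ}
    (ha : ∀ i ∈ s, 0 ≤ a i) (hb : ∀ i ∈ s, 0 ≤ b i) (hab : ∀ i ∈ s, b i = 0 → a i = 0)
    (hα : 1 ≤ α) :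
    (∑ i ∈ s, a i) ^ α * (∑ i ∈ s, b i) ^ (1 - α) ≤ ∑ i ∈ s, a i ^ α * b i ^ (1 - α) := by
  have hα0 : α ≠ 0 := by positivity
  set S := ∑ i ∈ s, b i
  have hS : 0 ≤ S := Finset.sum_nonneg hb
  have hT : S = 0 → ∑ i ∈ s, a i = 0 := fun h => Finset.sum_eq_zero fun i hi =>
    hab i hi ((Finset.sum_eq_zero_iff_of_nonneg hb).mp h i hi)
  rw [← mul_div_rpow_eq_rpow_mul_rpow_one_sub (Finset.sum_nonneg ha) hS hT hα0]
  rcases hS.eq_or_lt with hS0 | hSpos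
  · rw [← hS0, zero_mul]
    exact Finset.sum_nonneg fun i hi =>
      mul_nonneg (rpow_nonneg (ha i hi) _) (rpow_nonneg (hb i hi) _)
  have hw : ∑ i ∈ s, b i / S = 1 := by rw [← Finset.sum_div, div_self hSpos.ne']
  have hwz : ∑ i ∈ s, (b i / S) • (a i / b i) = (∑ i ∈ s, a i) / S := by
    rw [Finset.sum_div]
    refine Finset.sum_congr rfl fun i hi => ?_
    rcases (hb i hi).eq_or_lt with h | h
    · simp [← h, hab i hi h.symm]
    · rw [smul_eq_mul, div_mul_div_comm, mul_comm (b i), mul_div_mul_right _ _ h.ne']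
  have jensen := (convexOn_rpow hα).map_sum_le (fun i hi => div_nonneg (hb i hi) hS) hw
    (fun i hi => Set.mem_Ici.mpr (div_nonneg (ha i hi) (hb i hi)))
  rw [hwz] at jensen
  calc S * ((∑ i ∈ s, a i) / S) ^ α
      ≤ S * ∑ i ∈ s, (b i / S) • (a i / b i) ^ α := mul_le_mul_of_nonneg_left jensen hS
    _ = ∑ i ∈ s, b i * (a i / b i) ^ α := by
        rw [Finset.mul_sum]
        refine Finset.sum_congr rfl fun i _ => ?_
        rw [smul_eq_mul, ← mul_assoc, mul_div_cancel₀ _ hSpos.ne']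
    _ = ∑ i ∈ s, a i ^ α * b i ^ (1 - α) := Finset.sum_congr rfl fun i hi =>
        mul_div_rpow_eq_rpow_mul_rpow_one_sub (ha i hi) (hb i hi) (hab i hi) hα0

variable [Fintype ι]

noncomputable def pushforward (K : ι → κ → ℝ) (P : ι → ℝ) (j : κ) : ℝ := ∑ i, P i * K i j

/-- So that `D_α(P‖Q) = log (hellingerIntegral P Q α) / (α - 1)`. -/
noncomputable def hellingerIntegral (P Q : ι → ℝ) (α : ℝ) : ℝ := ∑ i, P i ^ α * Q i ^ (1 - α)

variable {K : ι → κ → ℝ} {P Q : ι → ℝ}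

theorem pushforward_nonneg (hP : ∀ i, 0 ≤ P i) (hK : ∀ i j, 0 ≤ K i j) (j : κ) :
    0 ≤ pushforward K P j :=
  Finset.sum_nonneg fun i _ => mul_nonneg (hP i) (hK i j)

theorem sum_pushforward [Fintype κ] (hK : ∀ i, ∑ j, K i j = 1) :
    ∑ j, pushforward K P j = ∑ i, P i := by
  simp only [pushforward]
  rw [Finset.sum_comm]
  simp only [← Finset.mul_sum, hK, mul_one]

theorem mul_eq_zero_imp_mul_eq_zero {p q c : ℝ} (h : q = 0 → p = 0) :
    q * c = 0 → p * c = 0 := by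
  intro hqc
  rcases mul_eq_zero.mp hqc with hq | hc
  · rw [h hq, zero_mul]
  · rw [hc, mul_zero]

theorem pushforward_eq_zero_imp (hQ : ∀ i, 0 ≤ Q i) (hK : ∀ i j, 0 ≤ K i j)
    (hPQ : ∀ i, Q i = 0 → P i = 0) (j : κ) : pushforward K Q j = 0 → pushforward K P j = 0 := by
  intro h
  have hterm := (Finset.sum_eq_zero_iff_of_nonneg fun i _ => mul_nonneg (hQ i) (hK i j)).mp h
  exact Finset.sum_eq_zero fun i hi => mul_eq_zero_imp_mul_eq_zero (hPQ i) (hterm i hi)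

theorem hellingerIntegral_pos (hP : ∀ i, 0 ≤ P i) (hQ : ∀ i, 0 ≤ Q i)
    (hPQ : ∀ i, Q i = 0 → P i = 0) (hP1 : 0 < ∑ i, P i) (α : ℝ) :
    0 < hellingerIntegral P Q α := by
  obtain ⟨i, -, hi⟩ :=
    Finset.exists_lt_of_sum_lt (s := .univ) (f := 0) (g := P) (by simpa using hP1)
  have hQi : 0 < Q i := (hQ i).lt_of_ne fun h => hi.ne' (hPQ i h.symm)
  exact Finset.sum_pos' (fun i _ => mul_nonneg (rpow_nonneg (hP i) _) (rpow_nonneg (hQ i) _))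
    ⟨i, Finset.mem_univ i, mul_pos (rpow_pos_of_pos hi _) (rpow_pos_of_pos hQi _)⟩

theorem hellingerIntegral_pushforward_le [Fintype κ] (hP : ∀ i, 0 ≤ P i) (hQ : ∀ i, 0 ≤ Q i)
    (hPQ : ∀ i, Q i = 0 → P i = 0) (hK0 : ∀ i j, 0 ≤ K i j) (hK1 : ∀ i, ∑ j, K i j = 1)
    {α : ℝ} (hα : 1 ≤ α) :
    hellingerIntegral (pushforward K P) (pushforward K Q) α ≤ hellingerIntegral P Q α := by
  have hterm (j : κ) : pushforward K P j ^ α * pushforward K Q j ^ (1 - α) ≤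
      pushforward K (fun i => P i ^ α * Q i ^ (1 - α)) j := by
    refine (rpow_sum_mul_rpow_sum_one_sub_le _ (fun i _ => mul_nonneg (hP i) (hK0 i j))
      (fun i _ => mul_nonneg (hQ i) (hK0 i j))
      (fun i _ => mul_eq_zero_imp_mul_eq_zero (hPQ i)) hα).trans_eq ?_
    exact Finset.sum_congr rfl fun i _ => mul_rpow_mul_mul_rpow_one_sub (hP i) (hQ i) (hK0 i j)
  calc hellingerIntegral (pushforward K P) (pushforward K Q) α
      ≤ ∑ j, pushforward K (fun i => P i ^ α * Q i ^ (1 - α)) j :=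
        Finset.sum_le_sum fun j _ => hterm j
    _ = hellingerIntegral P Q α := sum_pushforward hK1

end

theorem renyi_div_data_processing_general (n m : ℕ) (P Q : Fin n → ℝ)
    (hP0 : ∀ i, 0 ≤ P i) (hQ0 : ∀ i, 0 < Q i)
    (hP1 : ∑ i, P i = 1)
    (K : Fin n → Fin m → ℝ)
    (hK0 : ∀ i j, 0 ≤ K i j) (hK1 : ∀ i, ∑ j, K i j = 1)
    (α : ℝ) (hα : 1 < α) :
    (1 / (α - 1)) * Real.log (∑ j, (∑ i, P i * K i j) ^ α * (∑ i, Q i * K i j) ^ (1 - α))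
      ≤ (1 / (α - 1)) * Real.log (∑ i, P i ^ α * Q i ^ (1 - α)) := by
  have hQ : ∀ i, 0 ≤ Q i := fun i => (hQ0 i).le
  have hPQ : ∀ i, Q i = 0 → P i = 0 := fun i h => absurd h (hQ0 i).ne'
  have hpos : 0 < hellingerIntegral (pushforward K P) (pushforward K Q) α :=
    hellingerIntegral_pos (pushforward_nonneg hP0 hK0) (pushforward_nonneg hQ hK0)
      (pushforward_eq_zero_imp hQ hK0 hPQ) (by rw [sum_pushforward hK1, hP1]; exact one_pos) α
  have hle := hellingerIntegral_pushforward_le hP0 hQ hPQ hK0 hK1 hα.le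
  exact mul_le_mul_of_nonneg_left (log_le_log hpos hle) (one_div_nonneg.mpr (sub_nonneg.mpr hα.le))

/-- Theorem 1 (post-processing / data-processing inequality for the Rényi divergence,
finite stochastic-matrix case): post-processing pmfs `P, Q` on `Fin n` by a stochastic
matrix `K` does not increase the Rényi divergence of order `α > 1`. -/
theorem renyi_div_data_processing (n m : ℕ) (P Q : Fin n → ℝ)
    (hP0 : ∀ i, 0 ≤ P i) (hQ0 : ∀ i, 0 < Q i)
    (hP1 : ∑ i, P i = 1) (hQ1 : ∑ i, Q i = 1)
    (K : Fin n → Fin m → ℝ)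
    (hK0 : ∀ i j, 0 ≤ K i j) (hK1 : ∀ i, ∑ j, K i j = 1)
    (hKpos : ∀ j, ∃ i, 0 < K i j)
    (α : ℝ) (hα : 1 < α) :
    (1 / (α - 1)) * Real.log (∑ j, (∑ i, P i * K i j) ^ α * (∑ i, Q i * K i j) ^ (1 - α))
      ≤ (1 / (α - 1)) * Real.log (∑ i, P i ^ α * Q i ^ (1 - α)) :=
  renyi_div_data_processing_general n m P Q hP0 hQ0 hP1 K hK0 hK1 α hα
end

section
/- (Monotonicity of the endpoint masses of the quantized Gaussian in the input.) The map x ↦ P_x(k−1) is monotone nondecreasing on ℝ, and the map x ↦ P_x(0) is monotone nonincreasing on ℝ: for all reals x ≤ x', P_x(k−1) ≤ P_{x'}(k−1) and P_x(0) ≥ P_{x'}(0). -/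
open MeasureTheory Real

/-!
Both endpoint masses are integrals `∫ f_x(t) w(t) dt` of the Gaussian density against a
clamped linear ramp `w` (increasing for `P_x(k-1)`, decreasing for `P_x(0)`). Since
`f_x(t) = f_0(t - x)`, translating gives `∫ f_0(u) w(u + x) du`, and a monotone `w` makes the
integrand pointwise monotone in `x`.
-/

noncomputable def ramp (a b t : ℝ) : ℝ := min 1 (max 0 ((t - a) / (b - a)))

section Ramp

variable {a b t : ℝ}

lemma ramp_mem_Icc : ramp a b t ∈ Set.Icc 0 1 :=
  ⟨le_min zero_le_one (le_max_left _ _), min_le_left _ _⟩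

lemma abs_ramp_le_one : |ramp a b t| ≤ 1 := by
  obtain ⟨h0, h1⟩ := ramp_mem_Icc (a := a) (b := b) (t := t)
  exact abs_le.2 ⟨by linarith, h1⟩

lemma abs_one_sub_ramp_le_one : |1 - ramp a b t| ≤ 1 := by
  obtain ⟨h0, h1⟩ := ramp_mem_Icc (a := a) (b := b) (t := t)
  exact abs_le.2 ⟨by linarith, by linarith⟩

lemma monotone_ramp (hab : a ≤ b) : Monotone (ramp a b) := fun _ _ hst =>
  min_le_min le_rfl (max_le_max le_rfl (div_le_div_of_nonneg_right (by linarith) (by linarith)))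

lemma antitone_one_sub_ramp (hab : a ≤ b) : Antitone fun t => 1 - ramp a b t :=
  fun _ _ hst => sub_le_sub_left (monotone_ramp hab hst) 1

lemma ramp_of_le (hab : a ≤ b) (ht : t ≤ a) : ramp a b t = 0 := by
  rw [ramp, max_eq_left (div_nonpos_of_nonpos_of_nonneg (by linarith) (by linarith))]
  exact min_eq_right zero_le_one

lemma ramp_of_ge (hab : a < b) (ht : b ≤ t) : ramp a b t = 1 := by
  rw [ramp, min_eq_left]
  exact le_max_of_le_right ((one_le_div (by linarith)).2 (by linarith))

lemma ramp_of_mem_Icc (ht : t ∈ Set.Icc a b) : ramp a b t = (t - a) / (b - a) := by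
  obtain ⟨hat, htb⟩ := ht
  rw [ramp, max_eq_right (div_nonneg (by linarith) (by linarith)),
    min_eq_right (div_le_one_of_le₀ (by linarith) (by linarith))]

end Ramp

section Splitting

variable {f : ℝ → ℝ} {a b : ℝ}

lemma integral_eq_Iic_add_intervalIntegral_add_Ioi (hf : Integrable f) (a b : ℝ) :
    ∫ t, f t = (∫ t in Set.Iic a, f t) + ((∫ t in a..b, f t) + ∫ t in Set.Ioi b, f t) := by
  rw [intervalIntegral.integral_interval_add_Ioi hf.integrableOn hf.integrableOn,
    intervalIntegral.integral_Iic_add_Ioi hf.integrableOn hf.integrableOn]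

lemma integral_mul_ramp (hf : Integrable f) (hab : a < b) :
    ∫ t, f t * ramp a b t =
      (∫ t in a..b, f t * (t - a) / (b - a)) + ∫ t in Set.Ici b, f t := by
  have hfw : Integrable fun t => f t * ramp a b t :=
    hf.mul_bdd (monotone_ramp hab.le).measurable.aestronglyMeasurable
      (c := 1) (Filter.Eventually.of_forall fun _ => abs_ramp_le_one)
  rw [integral_eq_Iic_add_intervalIntegral_add_Ioi hfw a b, integral_Ici_eq_integral_Ioi,
    setIntegral_congr_fun measurableSet_Iic (g := fun _ => 0)
      fun t ht => by simp [ramp_of_le hab.le ht],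
    setIntegral_congr_fun measurableSet_Ioi (g := f)
      fun t ht => by simp [ramp_of_ge hab (le_of_lt ht)],
    intervalIntegral.integral_congr (g := fun t => f t * (t - a) / (b - a))
      fun t ht => by simp [ramp_of_mem_Icc (Set.uIcc_of_le hab.le ▸ ht), mul_div_assoc]]
  simp

lemma integral_mul_one_sub_ramp (hf : Integrable f) (hab : a < b) :
    ∫ t, f t * (1 - ramp a b t) =
      (∫ t in Set.Iic a, f t) + ∫ t in a..b, f t * (b - t) / (b - a) := by
  have hfw : Integrable fun t => f t * (1 - ramp a b t) :=
    hf.mul_bdd ((monotone_ramp hab.le).measurable.const_sub 1).aestronglyMeasurable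
      (c := 1) (Filter.Eventually.of_forall fun _ => abs_one_sub_ramp_le_one)
  rw [integral_eq_Iic_add_intervalIntegral_add_Ioi hfw a b,
    setIntegral_congr_fun measurableSet_Iic (g := f)
      fun t ht => by simp [ramp_of_le hab.le ht],
    setIntegral_congr_fun measurableSet_Ioi (g := fun _ => 0)
      fun t ht => by simp [ramp_of_ge hab (le_of_lt ht)],
    intervalIntegral.integral_congr (g := fun t => f t * (b - t) / (b - a))
      fun t ht => by
        simp only [ramp_of_mem_Icc (Set.uIcc_of_le hab.le ▸ ht)]
        field_simp [sub_ne_zero.2 hab.ne']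
        ring]
  simp

end Splitting

section Translation

variable {g w : ℝ → ℝ} {C : ℝ}

lemma integral_comp_sub_mul (g w : ℝ → ℝ) (x : ℝ) :
    ∫ t, g (t - x) * w t = ∫ u, g u * w (u + x) := by
  simpa using integral_sub_right_eq_self (fun u => g u * w (u + x)) x

lemma monotone_integral_comp_sub_mul (hg : Integrable g) (hg0 : 0 ≤ g) (hw : Monotone w)
    (hwC : ∀ t, |w t| ≤ C) : Monotone fun x => ∫ t, g (t - x) * w t := by
  intro x x' hxx'
  have hint : ∀ y, Integrable fun u => g u * w (u + y) := fun y =>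
    hg.mul_bdd (hw.measurable.comp (measurable_add_const y)).aestronglyMeasurable
      (Filter.Eventually.of_forall fun _ => hwC _)
  simp only [integral_comp_sub_mul]
  exact integral_mono (hint x) (hint x') fun u =>
    mul_le_mul_of_nonneg_left (hw (by linarith)) (hg0 u)

lemma antitone_integral_comp_sub_mul (hg : Integrable g) (hg0 : 0 ≤ g) (hw : Antitone w)
    (hwC : ∀ t, |w t| ≤ C) : Antitone fun x => ∫ t, g (t - x) * w t := by
  intro x x' hxx'
  have := monotone_integral_comp_sub_mul hg hg0 hw.neg (C := C) (by simpa using hwC) hxx'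
  simp only [mul_neg, integral_neg] at this
  linarith

end Translation

lemma gpdf_nonneg {σ : ℝ} (hσ : 0 ≤ σ) (x t : ℝ) : 0 ≤ gpdf σ x t := by
  unfold gpdf
  positivity

lemma gpdf_eq_gpdf_zero_sub (σ x t : ℝ) : gpdf σ x t = gpdf σ 0 (t - x) := by
  simp [gpdf]

lemma integrable_gpdf (σ x : ℝ) : Integrable (gpdf σ x) := by
  rcases eq_or_ne σ 0 with rfl | hσ
  · rw [show gpdf 0 x = 0 from funext fun t => by simp [gpdf]]
    exact integrable_zero _ _ _
  have hexp :=
    (integrable_exp_neg_mul_sq (b := 1 / (2 * σ ^ 2)) (by positivity)).comp_sub_right x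
  refine (hexp.const_mul (1 / (σ * Real.sqrt (2 * Real.pi)))).congr
    (Filter.Eventually.of_forall fun t => ?_)
  simp only [gpdf]
  ring_nf

lemma Blev_succ_sub (Cq : ℝ) (k r : ℕ) :
    Blev Cq k (r + 1) - Blev Cq k r = 2 * Cq / ((k : ℝ) - 1) := by
  simp only [Blev]
  push_cast
  ring

/-- Monotonicity of the endpoint masses of the quantized Gaussian in the input:
`x ↦ P_x(k-1)` is nondecreasing and `x ↦ P_x(0)` is nonincreasing. -/
theorem quantGauss_endpoint_monotone (Cq σ : ℝ) (hC : 0 < Cq) (hσ : 0 < σ)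
    (k : ℕ) (hk : 2 ≤ k) (x x' : ℝ) (hxx' : x ≤ x') :
    qgPmf Cq σ k x (k - 1) ≤ qgPmf Cq σ k x' (k - 1)
    ∧ qgPmf Cq σ k x 0 ≥ qgPmf Cq σ k x' 0 := by
  obtain ⟨m, rfl⟩ : ∃ m, k = m + 2 := ⟨k - 2, by omega⟩
  have hδ : 0 < 2 * Cq / (((m + 2 : ℕ) : ℝ) - 1) :=
    div_pos (by linarith) (by push_cast; linarith)
  have hlt : ∀ r, Blev Cq (m + 2) r < Blev Cq (m + 2) (r + 1) := fun r => by
    linarith [Blev_succ_sub Cq (m + 2) r]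
  have htop : ∀ y, qgPmf Cq σ (m + 2) y (m + 2 - 1) =
      ∫ t, gpdf σ 0 (t - y) * ramp (Blev Cq (m + 2) m) (Blev Cq (m + 2) (m + 1)) t := by
    intro y
    rw [qgPmf, if_neg (by omega), if_pos rfl]
    simp only [Nat.add_sub_cancel, show m + 2 - 1 = m + 1 by omega,
      ← Blev_succ_sub Cq (m + 2) m, ← gpdf_eq_gpdf_zero_sub]
    exact (integral_mul_ramp (integrable_gpdf σ y) (hlt m)).symm
  have hbot : ∀ y, qgPmf Cq σ (m + 2) y 0 =
      ∫ t, gpdf σ 0 (t - y) * (1 - ramp (Blev Cq (m + 2) 0) (Blev Cq (m + 2) 1) t) := by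
    intro y
    rw [qgPmf, if_pos rfl, ← Blev_succ_sub Cq (m + 2) 0]
    simp only [← gpdf_eq_gpdf_zero_sub]
    exact (integral_mul_one_sub_ramp (integrable_gpdf σ y) (hlt 0)).symm
  have hg0 : 0 ≤ gpdf σ 0 := gpdf_nonneg hσ.le 0
  rw [ge_iff_le, htop, htop, hbot, hbot]
  exact ⟨monotone_integral_comp_sub_mul (integrable_gpdf σ 0) hg0 (monotone_ramp (hlt m).le)
      (fun _ => abs_ramp_le_one) hxx',
    antitone_integral_comp_sub_mul (integrable_gpdf σ 0) hg0
      (antitone_one_sub_ramp (hlt 0).le) (fun _ => abs_one_sub_ramp_le_one) hxx'⟩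
end
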